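/- arXiv:1011.5971 — 3 statements merged into one kernel-verified Lean document; each statement's English description precedes it below -/
import Mathlib

section
/- For any finite word w over alphabet A, there exists a unique shortest palindrome w^(+) having w as a prefix (the palindromic right-closure of w). -/
variable {A : Type*} [DecidableEq A]

/-- `psiW a` is the morphism with `ψ_a(a) = a` and `ψ_a(x) = ax` for `x ≠ a`. -/
def psiW (a : A) (w : List A) : List A :=
  w.flatMap (fun b => if b = a then [a] else [a, b])

/-- `muW x n = ψ_{x 1} ∘ ⋯ ∘ ψ_{x n}`. -/
def muW (x : ℕ → A) : ℕ → List A → List A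
  | 0 => id
  | n + 1 => fun w => muW x n (psiW (x (n + 1)) w)

/-- `hW x n = μ_n (x_{n+1})`. -/
def hW (x : ℕ → A) (n : ℕ) : List A := muW x n [x (n + 1)]

/-- `p` is the palindromic right-closure of `w`: the shortest palindrome having `w`
as a prefix. -/
def IsPalClosure (w p : List A) : Prop :=
  w <+: p ∧ p.reverse = p ∧
    ∀ q : List A, w <+: q → q.reverse = q → p.length ≤ q.length

/-- The finite word `w` is a prefix of the infinite word `s`. -/
def PrefInf (w : List A) (s : ℕ → A) : Prop :=
  ∀ i : ℕ, ∀ h : i < w.length, w[i] = s i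

/-- Number of occurrences (positions) of `w` as a factor of `v`. -/
def occ (w v : List A) : ℕ :=
  (List.range (v.length + 1)).countP
    (fun i => decide (i + w.length ≤ v.length ∧ (v.drop i).take w.length = w))

/-- `cat z k = z 1 ++ z 2 ++ ⋯ ++ z k`. -/
def cat (z : ℕ → List A) (k : ℕ) : List A := ((List.range' 1 k).map z).flatten

/-- `z` is the Ziv-Lempel factorization of the infinite word `s`: each `z m` is
the shortest prefix of `z m · z (m+1) ⋯` occurring only once in `z 1 ⋯ z m`. -/
def IsZFact (s : ℕ → A) (z : ℕ → List A) : Prop :=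
  ∀ m : ℕ, 1 ≤ m → z m ≠ [] ∧ PrefInf (cat z m) s ∧
    occ (z m) (cat z m) = 1 ∧
    ∀ p : List A, p <+: z m → p ≠ z m → 2 ≤ occ p (cat z m)

/-- `c` is the Crochemore factorization of the infinite word `s`: each `c m` is
either a fresh letter, or the longest prefix of `c m · c (m+1) ⋯` occurring
twice in `c 1 ⋯ c m`. -/
def IsCFact (s : ℕ → A) (c : ℕ → List A) : Prop :=
  ∀ m : ℕ, 1 ≤ m → c m ≠ [] ∧ PrefInf (cat c m) s ∧
    ((∃ a : A, c m = [a] ∧ a ∉ cat c (m - 1)) ∨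
      (2 ≤ occ (c m) (cat c m) ∧
        occ (c m ++ [s (cat c m).length]) (cat c m ++ [s (cat c m).length]) = 1))

section

variable {α : Type*}

/-- A palindrome `p` with prefix `w` also has suffix `w.reverse`; once `|p| ≤ 2|w|` these two
cover `p`, so `p` is determined by `w` and `|p|`. -/
theorem List.IsPrefix.eq_append_drop_reverse {w p : List α} (hwp : w <+: p)
    (hp : p.reverse = p) (hlen : p.length ≤ 2 * w.length) :
    p = w ++ w.reverse.drop (2 * w.length - p.length) := by
  obtain ⟨t, rfl⟩ := hwp
  simp only [List.length_append] at hlen ⊢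
  congr 1
  have hcut := congrArg (List.drop w.length) hp
  rw [List.reverse_append, List.drop_append, List.drop_left' rfl,
    List.drop_eq_nil_of_le (by simp; omega), List.length_reverse, List.nil_append] at hcut
  rw [show 2 * w.length - (w.length + t.length) = w.length - t.length by omega, hcut]

theorem exists_isPalClosure (w : List α) : ∃ p, IsPalClosure w p := by
  classical
  have h : ∃ n, ∃ p : List α, p.length = n ∧ w <+: p ∧ p.reverse = p :=
    ⟨_, w ++ w.reverse, rfl, List.prefix_append _ _, by simp⟩
  obtain ⟨p, hlen, hwp, hp⟩ := Nat.find_spec h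
  exact ⟨p, hwp, hp, fun q hwq hq => hlen ▸ Nat.find_min' h ⟨q, rfl, hwq, hq⟩⟩

theorem IsPalClosure.length_le {w p : List α} (h : IsPalClosure w p) :
    p.length ≤ 2 * w.length := by
  simpa [two_mul] using h.2.2 (w ++ w.reverse) (List.prefix_append _ _) (by simp)

theorem IsPalClosure.eq {w p q : List α} (hp : IsPalClosure w p) (hq : IsPalClosure w q) :
    p = q := by
  have hlen : p.length = q.length :=
    le_antisymm (hp.2.2 q hq.1 hq.2.1) (hq.2.2 p hp.1 hp.2.1)
  rw [hp.1.eq_append_drop_reverse hp.2.1 hp.length_le,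
    hq.1.eq_append_drop_reverse hq.2.1 hq.length_le, hlen]

end

theorem pal_closure_exists_unique (w : List A) :
    ∃! p : List A, IsPalClosure w p := by
  obtain ⟨p, hp⟩ := exists_isPalClosure w
  exact ⟨p, hp, fun q hq => hq.eq hp⟩
end

section
/- The palindromic closure of a word w is w^(+) = w \bar{p}, where w = p q and q is the longest palindromic suffix of w; equivalently, w^(+) = p q \bar{p}. -/
variable {A : Type*} [DecidableEq A]

theorem pal_closure_eq (w p q : List A) (hw : w = p ++ q)
    (hq : q.reverse = q) (hsuf : q <:+ w)
    (hmax : ∀ r : List A, r <:+ w → r.reverse = r → r.length ≤ q.length) :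
    IsPalClosure w (p ++ q ++ p.reverse) := by
  have hpq : p.length ≤ w.length ∧ q.length ≤ w.length := by
    constructor <;> simp [hw]
  refine ⟨⟨p.reverse, by simp [hw]⟩, by simp [List.reverse_append, hq, List.append_assoc], ?_⟩
  intro r hpre hpal
  obtain ⟨t, ht⟩ := hpre
  have hlen : r.length = w.length + t.length := by simp [← ht]
  by_cases hle : w.length ≤ t.length
  · have : (p ++ q ++ p.reverse).length = w.length + p.length := by simp [hw]; omega
    omega
  · push_neg at hle
    rw [← ht] at hpal
    have heq : w ++ t = t.reverse ++ w.reverse := by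
      conv_lhs => rw [← hpal]
      simp
    have heq2 : w.take t.length ++ (w.drop t.length ++ t) = t.reverse ++ w.reverse := by
      rw [← List.append_assoc, List.take_append_drop]; exact heq
    have hinj := List.append_inj heq2 (by simp [Nat.le_of_lt hle])
    have key : w.drop t.length ++ t = w.reverse := hinj.2
    have key1 : w.take t.length = t.reverse := hinj.1
    set s := w.drop t.length with hs
    have hspal : s.reverse = s := by
      have h1 : w = t.reverse ++ s.reverse := by
        conv_lhs => rw [← w.reverse_reverse, ← key]
        simp
      have h2 : w = t.reverse ++ s := by
        conv_lhs => rw [← List.take_append_drop t.length w, key1]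
      have := h2.symm.trans h1
      exact (List.append_cancel_left this).symm
    have hsuf' : s <:+ w := List.drop_suffix _ _
    have hle2 := hmax s hsuf' hspal
    have hslen : s.length = w.length - t.length := by simp [hs]
    have hwlen : w.length = p.length + q.length := by simp [hw]
    have : (p ++ q ++ p.reverse).length = p.length + q.length + p.length := by simp; omega
    omega
end

section
/- For every n, the word h_n = ψ_{x_1}⋯ψ_{x_n}(x_{n+1}) is primitive, i.e., h_n = u^m with m ≥ 1 implies m = 1. -/
/-!
Induction on `n`, peeling off the outermost morphism: `h_{n+1}` is `ψ_{x_1}` applied to the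
word `h_n` of the shifted sequence, and `h_0` is a letter. So it suffices that each `ψ_a`
preserves primitivity. Now `ψ_a` is injective, and its image consists of the words cut into
blocks `a` and `ab` (`b ≠ a`), so a prefix of `ψ_a(w)` followed by an `a` is itself in the
image. If `ψ_a(w) = u^m` with `m ≥ 2`, then `u` is followed by `u`, which starts with `a`;
hence `u = ψ_a(v)`, and `ψ_a(w) = ψ_a(v^m)` gives `w = v^m`.
-/

variable {A : Type*} [DecidableEq A]

def IsPrimitive (w : List A) : Prop :=
  ∀ (u : List A) (m : ℕ), 1 ≤ m → w = (List.replicate m u).flatten → m = 1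

omit [DecidableEq A] in
theorem isPrimitive_singleton (b : A) : IsPrimitive [b] := by
  intro u m _ h
  have hlen := congrArg List.length h
  simp only [List.length_singleton, List.length_flatten, List.map_replicate,
    List.sum_replicate, smul_eq_mul] at hlen
  exact Nat.eq_one_of_mul_eq_one_right hlen.symm

section psiW

variable (a : A)

@[simp]
theorem psiW_nil : psiW a [] = [] := rfl

@[simp]
theorem psiW_cons (b : A) (w : List A) :
    psiW a (b :: w) = (if b = a then [a] else [a, b]) ++ psiW a w :=
  List.flatMap_cons

@[simp]
theorem psiW_append (s t : List A) : psiW a (s ++ t) = psiW a s ++ psiW a t :=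
  List.flatMap_append

theorem psiW_flatten_replicate (m : ℕ) (v : List A) :
    psiW a (List.replicate m v).flatten = (List.replicate m (psiW a v)).flatten := by
  induction m with
  | zero => rfl
  | succ k ih => simp [List.replicate_succ, ih]

@[simp]
theorem psiW_eq_nil_iff {w : List A} : psiW a w = [] ↔ w = [] := by
  cases w with
  | nil => simp
  | cons b w => rw [psiW_cons]; split_ifs <;> simp

theorem psiW_ne_cons_of_ne {b : A} (hb : b ≠ a) (w l : List A) : psiW a w ≠ b :: l := by
  cases w with
  | nil => simp
  | cons c w => rw [psiW_cons]; split_ifs <;> simp [Ne.symm hb]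

theorem psiW_injective : Function.Injective (psiW a) := by
  intro w₁ w₂ h
  induction w₁ generalizing w₂ with
  | nil => exact ((psiW_eq_nil_iff a).1 h.symm).symm
  | cons b t ih =>
    cases w₂ with
    | nil => exact absurd ((psiW_eq_nil_iff a).1 h) (List.cons_ne_nil _ _)
    | cons c s =>
      by_cases hb : b = a <;> by_cases hc : c = a <;> simp [hb, hc] at h
      · rw [hb, hc, ih h]
      · exact absurd h (psiW_ne_cons_of_ne a hc _ _)
      · exact absurd h.symm (psiW_ne_cons_of_ne a hb _ _)
      · rw [h.1, ih h.2]

theorem exists_psiW_eq_of_psiW_eq_append {w s t : List A} (h : psiW a w = s ++ t)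
    (ht : ∀ b ∈ t.head?, b = a) : ∃ v, s = psiW a v := by
  induction w generalizing s with
  | nil => exact ⟨[], by simp_all⟩
  | cons b w ih =>
    rcases s with _ | ⟨c, s⟩
    · exact ⟨[], rfl⟩
    by_cases hb : b = a
    · simp only [psiW_cons, hb, if_true, List.cons_append, List.cons.injEq] at h
      obtain ⟨v, rfl⟩ := ih h.2
      exact ⟨a :: v, by simp [h.1]⟩
    · simp only [psiW_cons, hb, if_false, List.cons_append, List.nil_append,
        List.cons.injEq] at h
      obtain ⟨rfl, h⟩ := h
      rcases s with _ | ⟨d, s⟩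
      · rw [List.nil_append] at h
        exact absurd (ht b (by simp [← h])) hb
      · simp only [List.cons_append, List.cons.injEq] at h
        obtain ⟨rfl, h⟩ := h
        obtain ⟨v, rfl⟩ := ih h
        exact ⟨b :: v, by simp [hb]⟩

theorem exists_eq_flatten_replicate_of_psiW_eq {w u : List A} {m : ℕ} (hm : 2 ≤ m)
    (h : psiW a w = (List.replicate m u).flatten) : ∃ v, w = (List.replicate m v).flatten := by
  obtain ⟨k, rfl⟩ : ∃ k, m = k + 2 := ⟨m - 2, by omega⟩
  have hsplit : (List.replicate (k + 2) u).flatten = u ++ (List.replicate (k + 1) u).flatten := by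
    rw [List.replicate_succ, List.flatten_cons]
  obtain ⟨v, rfl⟩ : ∃ v, u = psiW a v := by
    rw [hsplit] at h
    refine exists_psiW_eq_of_psiW_eq_append a h fun b hb => ?_
    rcases u with _ | ⟨c, u⟩
    · simp at hb
    · simp only [List.replicate_succ, List.flatten_cons, List.cons_append, List.head?_cons,
        Option.mem_def, Option.some.injEq] at hb
      subst hb
      by_contra hc
      exact psiW_ne_cons_of_ne a hc _ _ h
  exact ⟨v, psiW_injective a (by rw [h, psiW_flatten_replicate])⟩

theorem IsPrimitive.psiW {w : List A} (hw : IsPrimitive w) : IsPrimitive (psiW a w) := by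
  intro u m hm h
  by_contra hm1
  obtain ⟨v, hv⟩ := exists_eq_flatten_replicate_of_psiW_eq a (by omega) h
  exact hm1 (hw v m hm hv)

end psiW

theorem muW_succ (x : ℕ → A) (n : ℕ) (w : List A) :
    muW x (n + 1) w = psiW (x 1) (muW (fun k => x (k + 1)) n w) := by
  induction n generalizing w with
  | zero => rfl
  | succ k ih => exact ih _

theorem hW_succ (x : ℕ → A) (n : ℕ) : hW x (n + 1) = psiW (x 1) (hW (fun k => x (k + 1)) n) :=
  muW_succ x n _

theorem isPrimitive_hW (x : ℕ → A) (n : ℕ) : IsPrimitive (hW x n) := by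
  induction n generalizing x with
  | zero => exact isPrimitive_singleton (x 1)
  | succ n ih => exact hW_succ x n ▸ (ih _).psiW (x 1)

theorem h_primitive (x : ℕ → A) (n : ℕ) :
    ∀ (w : List A) (m : ℕ), 1 ≤ m → hW x n = (List.replicate m w).flatten → m = 1 :=
  isPrimitive_hW x n
end
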